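/- Let X be a compact Hausdorff space, Y a Hausdorff space, and g : X → Y a continuous surjection that is monotone and open. Let A ⊆ X be closed. Define the relation x ~ x' if and only if x = x', or (g(x) = g(x') and the fiber g⁻¹({g(x)}) meets A). Then ~ is an equivalence relation, the quotient space Z = X/~ is Hausdorff, the quotient map φ : X → Z is a closed map, and the induced map π : Z → Y satisfying π ∘ φ = g is a well-defined continuous closed surjection that is monotone and open. -/

import Mathlib

/-!
Writing `S = g(A)`, two points are identified iff they are equal or lie in a common fiber over
`S`. Hence the saturation of a set `C` is `C ∪ g⁻¹(g(C) ∩ S)`, which is closed when `C` is, since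
`g` is a closed map (compact domain, Hausdorff target). So the quotient map is closed; a closed
continuous image of a compact Hausdorff (in particular T₄) space is T₄, hence Hausdorff. The
induced map `π` has `π ∘ φ = g` with `φ` a continuous surjection, so closedness, openness,
surjectivity and connectedness of fibers all descend from `g` to `π`.
-/

noncomputable section

/-- The relation on `X` collapsing each fiber of `g` that meets `A` to a point:
`x ~ x'` iff `x = x'`, or `g x = g x'` and the fiber `g ⁻¹' {g x}` meets `A`. -/
def fiberPinchRel {X Y : Type*} (g : X → Y) (A : Set X) (x x' : X) : Prop :=
  x = x' ∨ (g x = g x' ∧ (g ⁻¹' {g x} ∩ A).Nonempty)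

open Function

section ClosedImage

variable {X Z : Type*} [TopologicalSpace X] [TopologicalSpace Z] {f : X → Z}

theorem IsClosedMap.normalSpace [NormalSpace X] (hf : IsClosedMap f) (hfc : Continuous f)
    (hfs : Surjective f) : NormalSpace Z where
  normal s t hs ht hst := by
    obtain ⟨U, V, hU, hV, hsU, htV, hUV⟩ :=
      normal_separation (hs.preimage hfc) (ht.preimage hfc) (hst.preimage f)
    -- `(f '' Uᶜ)ᶜ` is the largest set whose preimage lies in `U`
    refine ⟨(f '' Uᶜ)ᶜ, (f '' Vᶜ)ᶜ, (hf _ hU.isClosed_compl).isOpen_compl,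
      (hf _ hV.isClosed_compl).isOpen_compl, ?_, ?_, ?_⟩
    · rintro _ hz ⟨x, hxU, rfl⟩
      exact hxU (hsU hz)
    · rintro _ hz ⟨x, hxV, rfl⟩
      exact hxV (htV hz)
    · refine Set.disjoint_left.mpr fun z hzU hzV => ?_
      obtain ⟨x, rfl⟩ := hfs z
      exact Set.disjoint_left.mp hUV (not_not.mp fun h => hzU ⟨x, h, rfl⟩)
        (not_not.mp fun h => hzV ⟨x, h, rfl⟩)

theorem IsClosedMap.t1Space [T1Space X] (hf : IsClosedMap f) (hfs : Surjective f) :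
    T1Space Z where
  t1 z := by
    obtain ⟨x, rfl⟩ := hfs z
    simpa only [Set.image_singleton] using hf _ (isClosed_singleton (x := x))

theorem IsClosedMap.t4Space [T4Space X] (hf : IsClosedMap f) (hfc : Continuous f)
    (hfs : Surjective f) : T4Space Z :=
  have := hf.t1Space hfs
  have := hf.normalSpace hfc hfs
  inferInstance

end ClosedImage

theorem isPreconnected_preimage_of_comp_surjective {X Y Z : Type*} [TopologicalSpace X]
    [TopologicalSpace Z] {φ : X → Z} {ψ : Z → Y} (hφ : Continuous φ) (hφs : Surjective φ)
    {s : Set Y} (h : IsPreconnected ((ψ ∘ φ) ⁻¹' s)) : IsPreconnected (ψ ⁻¹' s) := by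
  simpa only [Set.preimage_comp, Set.image_preimage_eq _ hφs] using h.image φ hφ.continuousOn

section FiberPinch

variable {X Y : Type*} {g : X → Y} {A : Set X}

theorem fiberPinchRel_iff {x x' : X} :
    fiberPinchRel g A x x' ↔ x = x' ∨ g x = g x' ∧ g x ∈ g '' A := by
  simp only [fiberPinchRel, Set.Nonempty, Set.mem_inter_iff, Set.mem_preimage,
    Set.mem_singleton_iff, Set.mem_image]
  exact or_congr_right (and_congr_right fun _ => exists_congr fun _ => and_comm)

theorem fiberPinchRel.apply_eq {x x' : X} (h : fiberPinchRel g A x x') : g x = g x' := by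
  rcases h with rfl | ⟨h, -⟩
  exacts [rfl, h]

variable (g A)

theorem fiberPinchRel_equivalence : Equivalence (fiberPinchRel g A) where
  refl _ := Or.inl rfl
  symm := by
    simp only [fiberPinchRel_iff]
    rintro x x' (rfl | ⟨h, hA⟩)
    exacts [Or.inl rfl, Or.inr ⟨h.symm, h ▸ hA⟩]
  trans := by
    simp only [fiberPinchRel_iff]
    rintro x x' x'' (rfl | ⟨h, hA⟩) h'
    · exact h'
    · rcases h' with rfl | ⟨h', -⟩
      exacts [Or.inr ⟨h, hA⟩, Or.inr ⟨h.trans h', hA⟩]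

theorem preimage_image_quot_mk_fiberPinchRel (C : Set X) :
    Quot.mk (fiberPinchRel g A) ⁻¹' (Quot.mk _ '' C) = C ∪ g ⁻¹' (g '' C ∩ g '' A) := by
  ext x'
  simp only [Set.mem_preimage, Set.mem_image, (fiberPinchRel_equivalence g A).quot_mk_eq_iff,
    fiberPinchRel_iff, Set.mem_union, Set.mem_inter_iff]
  constructor
  · rintro ⟨x, hx, rfl | ⟨h, hA⟩⟩
    exacts [Or.inl hx, Or.inr ⟨⟨x, hx, h⟩, h ▸ hA⟩]
  · rintro (hx' | ⟨⟨x, hx, h⟩, hA⟩)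
    exacts [⟨x', hx', Or.inl rfl⟩, ⟨x, hx, Or.inr ⟨h, h ▸ hA⟩⟩]

theorem isClosedMap_quot_mk_fiberPinchRel [TopologicalSpace X] [TopologicalSpace Y]
    (hgc : Continuous g) (hg : IsClosedMap g) (hA : IsClosed A) :
    IsClosedMap (Quot.mk (fiberPinchRel g A)) := fun C hC => by
  rw [← isQuotientMap_quot_mk.isClosed_preimage, preimage_image_quot_mk_fiberPinchRel]
  exact hC.union (((hg C hC).inter (hg A hA)).preimage hgc)

end FiberPinch

/-- Collapsing to points all fibers of a monotone open continuous surjection `g` of a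
compact Hausdorff space that meet a closed set `A` gives an equivalence relation whose
quotient is Hausdorff, whose quotient map is closed, and whose induced map to `Y` is a
well-defined continuous closed monotone open surjection. -/
theorem collapse_fibers_meeting_closed_set
    {X Y : Type*} [TopologicalSpace X] [CompactSpace X] [T2Space X]
    [TopologicalSpace Y] [T2Space Y]
    (g : X → Y) (hgc : Continuous g) (hgs : Function.Surjective g)
    (hgm : ∀ y : Y, IsPreconnected (g ⁻¹' {y})) (hgo : IsOpenMap g)
    (A : Set X) (hA : IsClosed A) :
    Equivalence (fiberPinchRel g A) ∧
    T2Space (Quot (fiberPinchRel g A)) ∧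
    IsClosedMap (Quot.mk (fiberPinchRel g A)) ∧
    ∃ π : Quot (fiberPinchRel g A) → Y,
      (∀ x : X, π (Quot.mk (fiberPinchRel g A) x) = g x) ∧
      Continuous π ∧ IsClosedMap π ∧ Function.Surjective π ∧
      (∀ y : Y, IsPreconnected (π ⁻¹' {y})) ∧ IsOpenMap π := by
  have hφ : IsClosedMap (Quot.mk (fiberPinchRel g A)) :=
    isClosedMap_quot_mk_fiberPinchRel g A hgc hgc.isClosedMap hA
  have := hφ.t4Space continuous_quot_mk Quot.mk_surjective
  refine ⟨fiberPinchRel_equivalence g A, inferInstance, hφ,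
    Quot.lift g fun _ _ h => h.apply_eq, fun _ => rfl, continuous_quot_lift _ hgc,
    hgc.isClosedMap.of_comp_surjective Quot.mk_surjective continuous_quot_mk,
    (Quot.surjective_lift _).mpr hgs,
    fun y => isPreconnected_preimage_of_comp_surjective continuous_quot_mk Quot.mk_surjective (hgm y),
    hgo.of_comp continuous_quot_mk Quot.mk_surjective⟩
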